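/- arXiv:1801.09028 — 2 statements merged into one kernel-verified Lean document; each statement's English description precedes it below -/
import Mathlib

section
/- Let n be a positive integer and w : {-1,1}^n → [0,∞) a weight function with nonempty support. Then log₂ Z(w) ≤ R(w) + n·log₂(3/2). -/
open Finset

/-- Map a boolean to the corresponding element of `{-1, 1} ⊆ ℝ`. -/
noncomputable def sgn (b : Bool) : ℝ := if b then 1 else -1

/-- Standard inner product on `ℝ^ι` restricted to the cube `{-1,1}^ι`. -/
noncomputable def ip {ι : Type*} [Fintype ι] [DecidableEq ι] (c x : ι → Bool) : ℝ :=
  ∑ i, sgn (c i) * sgn (x i)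

/-- `δ(c, w)`: the maximum over the support of `w` of `⟨c,x⟩ + log₂ w(x)`. -/
noncomputable def wdelta {ι : Type*} [Fintype ι] [DecidableEq ι] (c : ι → Bool) (w : (ι → Bool) → ℝ) : ℝ :=
  sSup {y : ℝ | ∃ x, 0 < w x ∧ y = ip c x + Real.logb 2 (w x)}

/-- The weighted Rademacher complexity `R(w) = E_c[δ(c,w)]`, `c` uniform on the cube. -/
noncomputable def wRad {ι : Type*} [Fintype ι] [DecidableEq ι] (w : (ι → Bool) → ℝ) : ℝ :=
  (∑ c : ι → Bool, wdelta c w) / 2 ^ (Fintype.card ι)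

/-- `Z(w)`: the total weight. -/
noncomputable def Zw {ι : Type*} [Fintype ι] [DecidableEq ι] (w : (ι → Bool) → ℝ) : ℝ := ∑ x, w x

/-- `w_min`: the smallest positive weight. -/
noncomputable def wmin {ι : Type*} [Fintype ι] [DecidableEq ι] (w : (ι → Bool) → ℝ) : ℝ :=
  sInf {y : ℝ | ∃ x, 0 < w x ∧ y = w x}

/-- `w_max`: the largest weight. -/
noncomputable def wmax {ι : Type*} [Fintype ι] [DecidableEq ι] (w : (ι → Bool) → ℝ) : ℝ :=
  sSup {y : ℝ | ∃ x, y = w x}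

/-! Induction on `n`, splitting the cube along the first coordinate into the slices
`w₊ = w(1, ·)` and `w₋ = w(-1, ·)`. As `Z(w) = Z(w₊) + Z(w₋)`, the induction hypothesis bounds
`log₂ Z(w)` by `lse(R(w₊), R(w₋)) + (n - 1) log₂(3/2)`, where `lse(a, b) = log₂(2^a + 2^b)`.
By weighted AM-GM, `lse` is the supremum over `l ∈ (0, 1)` of the affine maps
`l a + (1 - l) b + H(l)`, `H` the binary entropy (attained at the Gibbs weight), so it is
convex and Jensen gives `lse(R(w₊), R(w₋)) ≤ E_c lse(δ(c, w₊), δ(c, w₋))`. Finally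
`δ((±1, c), w)` dominates both `δ(c, w₊) ± 1` and `δ(c, w₋) ∓ 1`, and the elementary bound
`lse(a, b) ≤ log₂(3/2) + max(a, b, (a + b)/2 + 1)` compares `lse(δ(c, w₊), δ(c, w₋))` with the
average of `δ((1, c), w)` and `δ((-1, c), w)`, at the cost of one factor `log₂(3/2)`.
-/

open Real
open scoped BigOperators

noncomputable def logSumExp2 (a b : ℝ) : ℝ := logb 2 (2 ^ a + 2 ^ b)

lemma logSumExp2_add_const (a b t : ℝ) : logSumExp2 (a + t) (b + t) = logSumExp2 a b + t := by
  rw [logSumExp2, logSumExp2, rpow_add two_pos, rpow_add two_pos, ← add_mul,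
    logb_mul (by positivity) (by positivity), logb_rpow two_pos (by norm_num)]

lemma logb_add_le_logSumExp2 {x y a b : ℝ} (hx : 0 < x) (hy : 0 < y)
    (ha : logb 2 x ≤ a) (hb : logb 2 y ≤ b) : logb 2 (x + y) ≤ logSumExp2 a b := by
  rw [logb_le_iff_le_rpow one_lt_two hx] at ha
  rw [logb_le_iff_le_rpow one_lt_two hy] at hb
  exact logb_le_logb_of_le one_lt_two (by positivity) (add_le_add ha hb)

lemma le_logSumExp2 {l : ℝ} (h0 : 0 < l) (h1 : l < 1) (a b : ℝ) :
    l * a + (1 - l) * b - l * logb 2 l - (1 - l) * logb 2 (1 - l) ≤ logSumExp2 a b := by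
  have h1l : 0 < 1 - l := by linarith
  have amgm : (2 ^ a / l) ^ l * (2 ^ b / (1 - l)) ^ (1 - l) ≤ (2 : ℝ) ^ a + 2 ^ b := by
    calc (2 ^ a / l) ^ l * (2 ^ b / (1 - l)) ^ (1 - l)
        ≤ l * (2 ^ a / l) + (1 - l) * (2 ^ b / (1 - l)) :=
          geom_mean_le_arith_mean2_weighted h0.le h1l.le (by positivity) (by positivity) (by ring)
      _ = 2 ^ a + 2 ^ b := by field_simp
  calc l * a + (1 - l) * b - l * logb 2 l - (1 - l) * logb 2 (1 - l)
      = logb 2 ((2 ^ a / l) ^ l * (2 ^ b / (1 - l)) ^ (1 - l)) := by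
        rw [logb_mul (by positivity) (by positivity), logb_rpow_eq_mul_logb_of_pos (by positivity),
          logb_rpow_eq_mul_logb_of_pos (by positivity), logb_div (by positivity) h0.ne',
          logb_div (by positivity) h1l.ne', logb_rpow two_pos (by norm_num),
          logb_rpow two_pos (by norm_num)]
        ring
    _ ≤ logSumExp2 a b := logb_le_logb_of_le one_lt_two (by positivity) amgm

lemma logSumExp2_eq_of_gibbs {a b l : ℝ} (hl : l = 2 ^ a / (2 ^ a + 2 ^ b)) :
    logSumExp2 a b = l * a + (1 - l) * b - l * logb 2 l - (1 - l) * logb 2 (1 - l) := by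
  have hS : (0 : ℝ) < 2 ^ a + 2 ^ b := by positivity
  have h1l : 1 - l = 2 ^ b / (2 ^ a + 2 ^ b) := by
    rw [hl]; field_simp; ring
  have hlog (t : ℝ) : logb 2 (2 ^ t / (2 ^ a + 2 ^ b)) = t - logSumExp2 a b := by
    rw [logb_div (by positivity) hS.ne', logb_rpow two_pos (by norm_num), logSumExp2]
  rw [show logb 2 l = a - logSumExp2 a b by rw [hl, hlog],
    show logb 2 (1 - l) = b - logSumExp2 a b by rw [h1l, hlog]]
  ring

lemma logSumExp2_expect_le {F : Type*} [Fintype F] [Nonempty F] (a b : F → ℝ) :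
    logSumExp2 (𝔼 i, a i) (𝔼 i, b i) ≤ 𝔼 i, logSumExp2 (a i) (b i) := by
  set l : ℝ := 2 ^ (𝔼 i, a i) / (2 ^ (𝔼 i, a i) + 2 ^ (𝔼 i, b i))
  have h0 : 0 < l := by positivity
  have h1 : l < 1 :=
    (div_lt_one (by positivity)).2 (by linarith [rpow_pos_of_pos two_pos (𝔼 i, b i)])
  set H := - l * logb 2 l - (1 - l) * logb 2 (1 - l)
  calc logSumExp2 (𝔼 i, a i) (𝔼 i, b i)
      = 𝔼 i, (l * a i + (1 - l) * b i + H) := by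
        rw [logSumExp2_eq_of_gibbs rfl, Finset.expect_add_distrib, Finset.expect_add_distrib,
          ← Finset.mul_expect, ← Finset.mul_expect, Fintype.expect_const]
        ring
    _ ≤ 𝔼 i, logSumExp2 (a i) (b i) :=
        Finset.expect_le_expect fun i _ => by linarith [le_logSumExp2 h0 h1 (a i) (b i)]

lemma sq_add_sq_le_three_halves_mul_max {u v : ℝ} (hu : 0 ≤ u) (hv : 0 ≤ v) :
    u ^ 2 + v ^ 2 ≤ 3 / 2 * max (max (u ^ 2) (v ^ 2)) (2 * u * v) := by
  rcases le_or_gt (2 * v) u with h | h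
  · nlinarith [le_max_left (u ^ 2) (v ^ 2), le_max_left (max (u ^ 2) (v ^ 2)) (2 * u * v)]
  rcases le_or_gt (2 * u) v with h' | h'
  · nlinarith [le_max_right (u ^ 2) (v ^ 2), le_max_left (max (u ^ 2) (v ^ 2)) (2 * u * v)]
  -- `(2v - u)(2u - v) ≥ 0` gives `u² + v² ≤ 5/2 · uv`
  nlinarith [le_max_right (max (u ^ 2) (v ^ 2)) (2 * u * v),
    mul_pos (by linarith : 0 < 2 * v - u) (by linarith : 0 < 2 * u - v)]

lemma logSumExp2_le_max (a b : ℝ) :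
    logSumExp2 a b ≤ logb 2 (3 / 2) + max (max a b) ((a + b) / 2 + 1) := by
  set M := max (max a b) ((a + b) / 2 + 1)
  have sq_half (t : ℝ) : (2 : ℝ) ^ t = (2 ^ (t / 2)) ^ 2 := by
    rw [← rpow_natCast, ← rpow_mul zero_le_two]; norm_num
  have mid : (2 : ℝ) ^ ((a + b) / 2 + 1) = 2 * 2 ^ (a / 2) * 2 ^ (b / 2) := by
    rw [rpow_add two_pos, rpow_one, add_div, rpow_add two_pos]; ring
  have hM (t : ℝ) (ht : t ≤ M) : (2 : ℝ) ^ t ≤ 2 ^ M := rpow_le_rpow_of_exponent_le one_le_two ht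
  have key : (2 : ℝ) ^ a + 2 ^ b ≤ 3 / 2 * 2 ^ M :=
    calc (2 : ℝ) ^ a + 2 ^ b ≤ 3 / 2 * max (max (2 ^ a) (2 ^ b)) (2 ^ ((a + b) / 2 + 1)) := by
          rw [sq_half a, sq_half b, mid]
          exact sq_add_sq_le_three_halves_mul_max (by positivity) (by positivity)
      _ ≤ 3 / 2 * 2 ^ M := by
          gcongr
          exact max_le (max_le (hM _ ((le_max_left _ _).trans (le_max_left _ _)))
            (hM _ ((le_max_right _ _).trans (le_max_left _ _)))) (hM _ (le_max_right _ _))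
  calc logSumExp2 a b ≤ logb 2 (3 / 2 * 2 ^ M) := logb_le_logb_of_le one_lt_two (by positivity) key
    _ = logb 2 (3 / 2) + M := by
      rw [logb_mul (by norm_num) (by positivity), logb_rpow two_pos (by norm_num)]

section Cube

variable {ι : Type*} [Fintype ι] [DecidableEq ι]

lemma ip_add_logb_le_wdelta (c : ι → Bool) {w : (ι → Bool) → ℝ} {x : ι → Bool} (hx : 0 < w x) :
    ip c x + logb 2 (w x) ≤ wdelta c w :=
  le_csSup ((Set.finite_range fun x => ip c x + logb 2 (w x)).subset
    (by rintro _ ⟨x, -, rfl⟩; exact ⟨x, rfl⟩)).bddAbove ⟨x, hx, rfl⟩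

lemma wRad_eq_expect (w : (ι → Bool) → ℝ) : wRad w = 𝔼 c, wdelta c w := by
  rw [Fintype.expect_eq_sum_div_card, wRad]
  simp

lemma Zw_eq_zero_of_forall_nonpos {w : (ι → Bool) → ℝ} (hw : ∀ x, 0 ≤ w x)
    (h : ¬∃ x, 0 < w x) : Zw w = 0 :=
  Finset.sum_eq_zero fun x _ => le_antisymm (not_lt.1 fun hx => h ⟨x, hx⟩) (hw x)

lemma Zw_pos {w : (ι → Bool) → ℝ} (hw : ∀ x, 0 ≤ w x) (hsupp : ∃ x, 0 < w x) : 0 < Zw w :=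
  Finset.sum_pos' (fun x _ => hw x) (hsupp.imp fun x hx => ⟨Finset.mem_univ x, hx⟩)

lemma logb_Zw_le_wRad_of_isEmpty [IsEmpty ι] {w : (ι → Bool) → ℝ} (hsupp : ∃ x, 0 < w x) :
    logb 2 (Zw w) ≤ wRad w := by
  obtain ⟨x, hx⟩ := hsupp
  rw [Zw, wRad, Fintype.sum_subsingleton _ x, Fintype.sum_subsingleton _ x, Fintype.card_eq_zero,
    pow_zero, div_one]
  simpa [ip] using ip_add_logb_le_wdelta x hx

end Cube

section Slice

variable {n : ℕ}

def cubeSlice (s : Bool) (w : (Fin (n + 1) → Bool) → ℝ) (x : Fin n → Bool) : ℝ :=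
  w (Fin.cons s x)

lemma ip_cons (b s : Bool) (c x : Fin n → Bool) :
    ip (Fin.cons b c) (Fin.cons s x) = sgn b * sgn s + ip c x := by
  simp [ip, Fin.sum_univ_succ]

lemma sum_cube_succ (f : (Fin (n + 1) → Bool) → ℝ) :
    ∑ x, f x = ∑ x : Fin n → Bool, (f (Fin.cons true x) + f (Fin.cons false x)) := by
  rw [← (Fin.consEquiv fun _ => Bool).sum_comp, Fintype.sum_prod_type, Fintype.sum_bool,
    ← Finset.sum_add_distrib]
  rfl

lemma expect_cube_succ (f : (Fin (n + 1) → Bool) → ℝ) :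
    𝔼 x, f x = 𝔼 x : Fin n → Bool, (f (Fin.cons true x) + f (Fin.cons false x)) / 2 := by
  simp only [Fintype.expect_eq_sum_div_card, sum_cube_succ f, ← Finset.sum_div, Fintype.card_fun,
    Fintype.card_bool, Fintype.card_fin, pow_succ]
  push_cast
  ring

lemma Zw_eq_add_cubeSlice (w : (Fin (n + 1) → Bool) → ℝ) :
    Zw w = Zw (cubeSlice true w) + Zw (cubeSlice false w) := by
  rw [Zw, sum_cube_succ, Finset.sum_add_distrib]
  rfl

lemma exists_cubeSlice_pos {w : (Fin (n + 1) → Bool) → ℝ} (hsupp : ∃ x, 0 < w x) :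
    ∃ s x, 0 < cubeSlice s w x := by
  obtain ⟨x, hx⟩ := hsupp
  exact ⟨x 0, Fin.tail x, by rwa [cubeSlice, Fin.cons_self_tail]⟩

lemma sgn_mul_add_wdelta_cubeSlice_le (b s : Bool) (c : Fin n → Bool)
    {w : (Fin (n + 1) → Bool) → ℝ} (hs : ∃ x, 0 < cubeSlice s w x) :
    sgn b * sgn s + wdelta c (cubeSlice s w) ≤ wdelta (Fin.cons b c) w := by
  obtain ⟨x₀, hx₀⟩ := hs
  rw [← le_sub_iff_add_le']
  refine csSup_le ⟨_, x₀, hx₀, rfl⟩ ?_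
  rintro _ ⟨x, hx, rfl⟩
  have := ip_add_logb_le_wdelta (Fin.cons b c) (x := Fin.cons s x) hx
  rw [ip_cons] at this
  rw [cubeSlice]
  linarith

lemma wRad_cubeSlice_le {w : (Fin (n + 1) → Bool) → ℝ} {s : Bool}
    (hs : ∃ x, 0 < cubeSlice s w x) :
    wRad (cubeSlice s w) ≤ wRad w := by
  rw [wRad_eq_expect, wRad_eq_expect, expect_cube_succ]
  refine Finset.expect_le_expect fun c _ => ?_
  have h₁ := sgn_mul_add_wdelta_cubeSlice_le true s c hs
  have h₂ := sgn_mul_add_wdelta_cubeSlice_le false s c hs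
  have : sgn true * sgn s + sgn false * sgn s = 0 := by cases s <;> norm_num [sgn]
  linarith

lemma logSumExp2_wRad_cubeSlice_le {w : (Fin (n + 1) → Bool) → ℝ}
    (ht : ∃ x, 0 < cubeSlice true w x) (hf : ∃ x, 0 < cubeSlice false w x) :
    logSumExp2 (wRad (cubeSlice true w)) (wRad (cubeSlice false w)) ≤ wRad w + logb 2 (3 / 2) := by
  have pointwise (c : Fin n → Bool) :
      logSumExp2 (wdelta c (cubeSlice true w)) (wdelta c (cubeSlice false w)) ≤
        (wdelta (Fin.cons true c) w + wdelta (Fin.cons false c) w) / 2 + logb 2 (3 / 2) := by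
    have h₁ := sgn_mul_add_wdelta_cubeSlice_le true true c ht
    have h₂ := sgn_mul_add_wdelta_cubeSlice_le true false c hf
    have h₃ := sgn_mul_add_wdelta_cubeSlice_le false true c ht
    have h₄ := sgn_mul_add_wdelta_cubeSlice_le false false c hf
    norm_num [sgn] at h₁ h₂ h₃ h₄
    have := logSumExp2_le_max (wdelta c (cubeSlice true w)) (wdelta c (cubeSlice false w))
    have : max (max (wdelta c (cubeSlice true w)) (wdelta c (cubeSlice false w)))
        ((wdelta c (cubeSlice true w) + wdelta c (cubeSlice false w)) / 2 + 1) ≤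
        (wdelta (Fin.cons true c) w + wdelta (Fin.cons false c) w) / 2 :=
      max_le (max_le (by linarith) (by linarith)) (by linarith)
    linarith
  rw [wRad_eq_expect, wRad_eq_expect, wRad_eq_expect, expect_cube_succ]
  calc _ ≤ _ := logSumExp2_expect_le _ _
    _ ≤ _ := Finset.expect_le_expect fun c _ => pointwise c
    _ = _ := by rw [Finset.expect_add_distrib, Fintype.expect_const]

end Slice

theorem stmt8_general (n : ℕ) (w : (Fin n → Bool) → ℝ)
    (hw : ∀ x, 0 ≤ w x) (hsupp : ∃ x, 0 < w x) :
    Real.logb 2 (Zw w) ≤ wRad w + n * Real.logb 2 (3 / 2) := by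
  induction n with
  | zero => simpa using logb_Zw_le_wRad_of_isEmpty hsupp
  | succ n ih =>
    have hγ : 0 ≤ logb 2 (3 / 2) := logb_nonneg one_lt_two (by norm_num)
    have ih' (s : Bool) (hs : ∃ x, 0 < cubeSlice s w x) :=
      ih (cubeSlice s w) (fun _ => hw _) hs
    rw [Zw_eq_add_cubeSlice]
    push_cast
    by_cases ht : ∃ x, 0 < cubeSlice true w x <;> by_cases hf : ∃ x, 0 < cubeSlice false w x
    · calc logb 2 (Zw (cubeSlice true w) + Zw (cubeSlice false w))
          ≤ logSumExp2 (wRad (cubeSlice true w) + n * logb 2 (3 / 2))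
              (wRad (cubeSlice false w) + n * logb 2 (3 / 2)) :=
            logb_add_le_logSumExp2 (Zw_pos (fun _ => hw _) ht) (Zw_pos (fun _ => hw _) hf)
              (ih' _ ht) (ih' _ hf)
        _ ≤ wRad w + (n + 1) * logb 2 (3 / 2) := by
            rw [logSumExp2_add_const]
            linarith [logSumExp2_wRad_cubeSlice_le ht hf]
    · rw [Zw_eq_zero_of_forall_nonpos (w := cubeSlice false w) (fun _ => hw _) hf, add_zero]
      linarith [ih' _ ht, wRad_cubeSlice_le ht]
    · rw [Zw_eq_zero_of_forall_nonpos (w := cubeSlice true w) (fun _ => hw _) ht, zero_add]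
      linarith [ih' _ hf, wRad_cubeSlice_le hf]
    · obtain ⟨s, hs⟩ := exists_cubeSlice_pos hsupp
      cases s <;> contradiction

theorem stmt8 (n : ℕ) (hn : 0 < n) (w : (Fin n → Bool) → ℝ)
    (hw : ∀ x, 0 ≤ w x) (hsupp : ∃ x, 0 < w x) :
    Real.logb 2 (Zw w) ≤ wRad w + n * Real.logb 2 (3 / 2) :=
  stmt8_general n w hw hsupp
end

section
/- Let j ≥ 1 be an integer and w : {-1,1}^j → [0,∞) a weight function. Define w⁺(x) = w(x,1) and w⁻(x) = w(x,−1) on {-1,1}^{j−1}, and suppose both w⁺ and w⁻ have nonempty support. Then (R(w⁻) + R(w⁺))/2 ≤ R(w) − 1. -/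
open Finset

/-! Write `wˢ = w (Fin.snoc · s)`. Appending the same last coordinate `s` to `c` and to a point
`x` of the support of `wˢ` raises `⟨c, x⟩` by one, so `δ(c, wˢ) + 1 ≤ δ((c, s), w)`; averaging
over `c` and `s` gives the claim. -/

lemma sgn_mul_self (b : Bool) : sgn b * sgn b = 1 := by cases b <;> simp [sgn]

lemma ip_snoc_snoc {m : ℕ} (c x : Fin m → Bool) (s : Bool) :
    ip (Fin.snoc c s : Fin (m + 1) → Bool) (Fin.snoc x s) = ip c x + 1 := by
  simp [ip, Fin.sum_univ_castSucc, sgn_mul_self]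

lemma sum_cube_succ_s11 {M : Type*} [AddCommMonoid M] {m : ℕ} (f : (Fin (m + 1) → Bool) → M) :
    ∑ c, f c = ∑ c : Fin m → Bool, (f (Fin.snoc c false) + f (Fin.snoc c true)) := by
  rw [← (Fin.snocEquiv fun _ => Bool).sum_comp, Fintype.sum_prod_type, Fintype.sum_bool,
    add_comm, ← Finset.sum_add_distrib]
  rfl

lemma bddAbove_wdelta {ι : Type*} [Fintype ι] [DecidableEq ι] (c : ι → Bool)
    (w : (ι → Bool) → ℝ) :
    BddAbove {y : ℝ | ∃ x, 0 < w x ∧ y = ip c x + Real.logb 2 (w x)} :=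
  ((Set.finite_range fun x => ip c x + Real.logb 2 (w x)).subset
    (by rintro y ⟨x, _, rfl⟩; exact ⟨x, rfl⟩)).bddAbove

lemma wdelta_snoc_le {m : ℕ} (c : Fin m → Bool) (s : Bool) (w : (Fin (m + 1) → Bool) → ℝ)
    (hsupp : ∃ x : Fin m → Bool, 0 < w (Fin.snoc x s)) :
    wdelta c (fun x => w (Fin.snoc x s)) ≤ wdelta (Fin.snoc c s) w - 1 := by
  obtain ⟨x₀, hx₀⟩ := hsupp
  refine csSup_le ⟨_, x₀, hx₀, rfl⟩ ?_
  rintro y ⟨x, hx, rfl⟩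
  rw [le_sub_iff_add_le, add_right_comm, ← ip_snoc_snoc c x s]
  exact le_csSup (bddAbove_wdelta _ w) ⟨_, hx, rfl⟩

lemma wRad_sub {ι : Type*} [Fintype ι] [DecidableEq ι] (w : (ι → Bool) → ℝ) (a : ℝ) :
    wRad w - a = (∑ c : ι → Bool, (wdelta c w - a)) / 2 ^ Fintype.card ι := by
  rw [wRad, Finset.sum_sub_distrib, Finset.sum_const, Finset.card_univ, Fintype.card_fun,
    Fintype.card_bool, nsmul_eq_mul, Nat.cast_pow, Nat.cast_ofNat]
  field_simp

theorem stmt11_general (m : ℕ) (w : (Fin (m + 1) → Bool) → ℝ)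
    (hsuppP : ∃ x : Fin m → Bool, 0 < w (Fin.snoc x true))
    (hsuppM : ∃ x : Fin m → Bool, 0 < w (Fin.snoc x false)) :
    (wRad (fun x : Fin m → Bool => w (Fin.snoc x false)) +
       wRad (fun x : Fin m → Bool => w (Fin.snoc x true))) / 2 ≤ wRad w - 1 := by
  calc _ = (∑ c : Fin m → Bool, (wdelta c (fun x => w (Fin.snoc x false)) +
          wdelta c (fun x => w (Fin.snoc x true)))) / 2 ^ (m + 1) := by
        simp only [wRad, Fintype.card_fin, Finset.sum_add_distrib]; ring
    _ ≤ (∑ c : Fin m → Bool, ((wdelta (Fin.snoc c false) w - 1) +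
          (wdelta (Fin.snoc c true) w - 1))) / 2 ^ (m + 1) := by
        gcongr with c
        exacts [wdelta_snoc_le c false w hsuppM, wdelta_snoc_le c true w hsuppP]
    _ = wRad w - 1 := by rw [wRad_sub, sum_cube_succ_s11 (fun c => wdelta c w - 1), Fintype.card_fin]

theorem stmt11 (m : ℕ) (w : (Fin (m + 1) → Bool) → ℝ)
    (hw : ∀ x, 0 ≤ w x)
    (hsuppP : ∃ x : Fin m → Bool, 0 < w (Fin.snoc x true))
    (hsuppM : ∃ x : Fin m → Bool, 0 < w (Fin.snoc x false)) :
    (wRad (fun x : Fin m → Bool => w (Fin.snoc x false)) +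
       wRad (fun x : Fin m → Bool => w (Fin.snoc x true))) / 2 ≤ wRad w - 1 :=
  stmt11_general m w hsuppP hsuppM
end
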